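/- arXiv:2210.05660 — 2 statements merged into one kernel-verified Lean document; each statement's English description precedes it below -/
import Mathlib

section
/- In a K-armed bandit in which the rewards of each arm k are iid with finite mean μ_k (arbitrary distribution), using UCB designed for Gaussian rewards with variance σ² > 0, for each sub-optimal arm k, N_k(T)/log(T) → 2σ²/Δ_k² almost surely as T → ∞, and consequently the regret satisfies R(T)/log(T) → ∑_{k ≠ k*} 2σ²/Δ_k almost surely. -/
open MeasureTheory ProbabilityTheory Filter Finset Real Topology Asymptotics

/-!
Along almost every trajectory the sample means converge to the arm means (strong law of large
numbers), so everything else is a deterministic statement about the UCB arm sequence.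

Every arm is played infinitely often: an arm with bounded count has a bonus growing like
`√(log t)`, which eventually beats the index of any arm played many more times. Hence the sample
means along the play counts converge. When a sub-optimal arm `k` is played at a late time `t`, its
bonus must bridge the gap to the optimal arm, `σ √(2 log t / N_k) ≳ Δ_k`, so
`N_k(T) ≲ 2σ² log T / Δ_k²`. The optimal arm is therefore played `T - O(log T)` times, its bonus
tends to `0` and its index to `μ*`. Its last play before `T` happens after `T / 2`, and there the
index of `k` is at most `μ* + ε`, which forces `N_k(T) ≳ 2σ² log T / (Δ_k + ε)²`.
-/

lemma log_natCast_add_one_le {T : ℕ} (hT : 1 ≤ T) : log ((T : ℝ) + 1) ≤ log T + log 2 := by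
  have hT' : (1 : ℝ) ≤ T := by exact_mod_cast hT
  rw [← log_mul (by positivity) two_ne_zero]
  exact log_le_log (by positivity) (by linarith)

lemma isLittleO_const_mul_log_add_const (c C : ℝ) :
    (fun t : ℕ => c * log t + C) =o[atTop] (fun t => (t : ℝ)) :=
  ((isLittleO_log_id_atTop.const_mul_left c).add (isLittleO_const_id_atTop C)).comp_tendsto
    tendsto_natCast_atTop_atTop

lemma tendsto_div_of_bounds {α : Type*} {l : Filter α} {g u : α → ℝ} {ℓ : ℝ}
    (hg : Tendsto g l atTop)
    (hlo : ∀ b < ℓ, ∃ c > b, ∃ C, ∀ᶠ x in l, c * g x - C ≤ u x)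
    (hup : ∀ b > ℓ, ∃ c < b, ∃ C, ∀ᶠ x in l, u x ≤ c * g x + C) :
    Tendsto (fun x => u x / g x) l (𝓝 ℓ) := by
  rw [tendsto_order]
  constructor
  · intro b hb
    obtain ⟨c, hcb, C, hC⟩ := hlo b hb
    filter_upwards [hC, hg.eventually_gt_atTop 0, hg.eventually_gt_atTop (C / (c - b))]
      with x hx hg0 hgC
    rw [div_lt_iff₀ (by linarith)] at hgC
    rw [lt_div_iff₀ hg0]
    linarith
  · intro b hb
    obtain ⟨c, hcb, C, hC⟩ := hup b hb
    filter_upwards [hC, hg.eventually_gt_atTop 0, hg.eventually_gt_atTop (C / (b - c))]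
      with x hx hg0 hgC
    rw [div_lt_iff₀ (by linarith)] at hgC
    rw [div_lt_iff₀ hg0]
    linarith

lemma ae_tendsto_sampleMean {Ω : Type*} [MeasurableSpace Ω] {P : Measure Ω} {ν : Measure ℝ}
    {X : ℕ → Ω → ℝ} (hX : ∀ j, Measurable (X j)) (hdist : ∀ j, 1 ≤ j → P.map (X j) = ν)
    (hint : Integrable (fun x : ℝ => x) ν)
    (hindep : Pairwise fun i j => IndepFun (X (i + 1)) (X (j + 1)) P) :
    ∀ᵐ ω ∂P, Tendsto (fun n : ℕ => (∑ j ∈ Icc 1 n, X j ω) / n) atTop (𝓝 (∫ x, x ∂ν)) := by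
  have hident : ∀ j, IdentDistrib (X (j + 1)) (X (0 + 1)) P P := fun j =>
    ⟨(hX _).aemeasurable, (hX _).aemeasurable, by rw [hdist _ (by omega), hdist 1 le_rfl]⟩
  have hint₁ : Integrable (X (0 + 1)) P := by
    rw [← hdist 1 le_rfl] at hint
    exact (integrable_map_measure aestronglyMeasurable_id (hX 1).aemeasurable).1 hint
  have hmean : ∫ ω, X (0 + 1) ω ∂P = ∫ x, x ∂ν := by
    rw [← hdist 1 le_rfl]
    exact (integral_map (hX 1).aemeasurable aestronglyMeasurable_id).symm
  filter_upwards [strong_law_ae_real _ hint₁ hindep hident] with ω hω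
  rw [← hmean]
  refine hω.congr fun n => ?_
  rw [← Ico_add_one_right_eq_Icc, sum_Ico_eq_sum_range, add_tsub_cancel_right]
  simp only [add_comm]

namespace UCB

variable {K : ℕ}

def count (a : ℕ → Fin K) (k : Fin K) (t : ℕ) : ℕ :=
  ((Finset.Icc 1 t).filter (fun i => a i = k)).card

section Count

variable (a : ℕ → Fin K) (k : Fin K)

@[simp]
lemma count_zero : count a k 0 = 0 := rfl

lemma count_succ (t : ℕ) : count a k (t + 1) = count a k t + if a (t + 1) = k then 1 else 0 := by
  rw [count, ← insert_Icc_right_eq_Icc_add_one (by omega), filter_insert]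
  split_ifs
  · exact card_insert_of_notMem (by simp)
  · rfl

lemma count_mono : Monotone (count a k) :=
  monotone_nat_of_le_succ fun t => by rw [count_succ]; omega

lemma count_le (t : ℕ) : count a k t ≤ t :=
  (card_filter_le _ _).trans (by simp)

lemma sum_count (t : ℕ) : ∑ k, count a k t = t := by
  unfold count
  rw [← card_eq_sum_card_fiberwise (fun i _ => mem_univ (a i))]
  simp

variable {a k}

lemma exists_last_play {T : ℕ} (hT : 0 < count a k T) :
    ∃ t < T, a (t + 1) = k ∧ count a k t + 1 = count a k T ∧ count a k T ≤ t + 1 := by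
  induction T with
  | zero => simp at hT
  | succ T ih =>
    rw [count_succ] at hT ⊢
    by_cases hplay : a (T + 1) = k
    · refine ⟨T, T.lt_succ_self, hplay, by simp [hplay], ?_⟩
      simpa [hplay] using count_le a k T
    · simp only [hplay, if_false, add_zero] at hT ⊢
      obtain ⟨t, ht, hplay', hcount, hle⟩ := ih hT
      exact ⟨t, by omega, hplay', hcount, hle⟩

lemma count_le_max_of_forall_play {f : ℕ → ℝ} (hf : Monotone f) {T₀ : ℕ}
    (h : ∀ t, T₀ ≤ t → a (t + 1) = k → (count a k t : ℝ) ≤ f t) (T : ℕ) :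
    (count a k T : ℝ) ≤ max (count a k T₀ : ℝ) (f T + 1) := by
  induction T with
  | zero => simp
  | succ T ih =>
    rw [count_succ]
    by_cases hplay : a (T + 1) = k
    · simp only [hplay, if_true, Nat.cast_add, Nat.cast_one]
      rcases le_or_gt T₀ T with hT | hT
      · exact le_max_of_le_right (by linarith [h T hT hplay, hf T.le_succ])
      · refine le_max_of_le_left ?_
        have := count_mono a k (Nat.succ_le_of_lt hT)
        rw [count_succ, if_pos hplay] at this
        exact_mod_cast this
    · simp only [hplay, if_false, add_zero]
      exact ih.trans (max_le_max le_rfl (by linarith [hf T.le_succ]))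

lemma exists_count_unbounded (a : ℕ → Fin K) : ∃ j, Tendsto (count a j) atTop atTop := by
  by_contra! h
  have hbdd : ∀ j, ∃ c, ∀ t, count a j t < c := fun j => by
    simpa [tendsto_atTop_atTop_iff_of_monotone (count_mono a j)] using h j
  choose c hc using hbdd
  have := sum_le_sum fun j (_ : j ∈ univ) => (hc j (∑ j, c j + 1)).le
  rw [sum_count] at this
  omega

end Count

noncomputable def ucbBonus (σ : ℝ) (t n : ℕ) : ℝ := σ * √(2 * log ((t : ℝ) + 1) / (n : ℝ))

section Bonus

variable {σ : ℝ}

lemma ucbBonus_nonneg (hσ : 0 ≤ σ) (t n : ℕ) : 0 ≤ ucbBonus σ t n :=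
  mul_nonneg hσ (sqrt_nonneg _)

lemma ucbBonus_anti (hσ : 0 ≤ σ) (t : ℕ) {n n' : ℕ} (hn : 0 < n) (hnn' : n ≤ n') :
    ucbBonus σ t n' ≤ ucbBonus σ t n := by
  unfold ucbBonus
  gcongr
  · have : (0 : ℝ) ≤ t := t.cast_nonneg
    exact mul_nonneg zero_le_two (log_nonneg (by linarith))

lemma ucbBonus_four_mul (t n : ℕ) : ucbBonus σ t (4 * n) = ucbBonus σ t n / 2 := by
  have : √(4 : ℝ) = 2 := by
    rw [show (4 : ℝ) = 2 ^ 2 by norm_num, sqrt_sq zero_le_two]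
  simp only [ucbBonus, Nat.cast_mul, Nat.cast_ofNat]
  rw [mul_comm (4 : ℝ), ← div_div, sqrt_div' _ (by norm_num : (0 : ℝ) ≤ 4), this, mul_div_assoc']

lemma tendsto_ucbBonus_atTop (hσ : 0 < σ) {n : ℕ} (hn : 0 < n) :
    Tendsto (fun t => ucbBonus σ t n) atTop atTop := by
  have hlog : Tendsto (fun t : ℕ => log ((t : ℝ) + 1)) atTop atTop :=
    tendsto_log_atTop.comp (tendsto_atTop_add_const_right _ 1 tendsto_natCast_atTop_atTop)
  refine (tendsto_sqrt_atTop.comp ?_).const_mul_atTop hσ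
  exact (hlog.const_mul_atTop two_pos).atTop_div_const (by exact_mod_cast hn)

lemma ucbBonus_lt_iff (hσ : 0 ≤ σ) (t : ℕ) {n : ℕ} (hn : 0 < n) {δ : ℝ} (hδ : 0 < δ) :
    ucbBonus σ t n < δ ↔ 2 * σ ^ 2 / δ ^ 2 * log ((t : ℝ) + 1) < n := by
  have hn' : (0 : ℝ) < n := by exact_mod_cast hn
  have hlog : 0 ≤ log ((t : ℝ) + 1) := log_nonneg (by linarith [(t.cast_nonneg : (0 : ℝ) ≤ t)])
  have hsq : ∀ x, σ * √x = √(σ ^ 2 * x) := fun x => by rw [sqrt_mul (sq_nonneg σ), sqrt_sq hσ]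
  rw [ucbBonus, hsq, sqrt_lt' hδ, mul_div_assoc',
    div_lt_iff₀ hn', div_mul_eq_mul_div, div_lt_iff₀ (by positivity)]
  constructor <;> intro h <;> nlinarith

lemma tendsto_ucbBonus_nhds_zero {n : ℕ → ℕ}
    (h : Tendsto (fun t : ℕ => log ((t : ℝ) + 1) / n t) atTop (𝓝 0)) :
    Tendsto (fun t => ucbBonus σ t (n t)) atTop (𝓝 0) := by
  have := ((continuous_sqrt.tendsto _).comp (h.const_mul 2)).const_mul σ
  simpa only [ucbBonus, mul_div_assoc, mul_zero, sqrt_zero, Function.comp_def] using this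

end Bonus

/-- `m k n` stands for the sample mean of the first `n` rewards of arm `k`. -/
structure IsUCBRun (σ : ℝ) (m : Fin K → ℕ → ℝ) (a : ℕ → Fin K) : Prop where
  count_init : ∀ k, count a k K = 1
  index_le : ∀ t, K ≤ t → ∀ k,
    m k (count a k t) + ucbBonus σ t (count a k t)
      ≤ m (a (t + 1)) (count a (a (t + 1)) t) + ucbBonus σ t (count a (a (t + 1)) t)

namespace IsUCBRun

variable {σ : ℝ} {μ : Fin K → ℝ} {m : Fin K → ℕ → ℝ} {a : ℕ → Fin K}

lemma count_pos (h : IsUCBRun σ m a) (k : Fin K) {t : ℕ} (ht : K ≤ t) : 0 < count a k t :=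
  (h.count_init k).symm.trans_le (count_mono a k ht)

lemma tendsto_count_atTop (h : IsUCBRun σ m a) (hσ : 0 < σ)
    (hbdd : ∀ k, BddAbove (Set.range (m k))) (k : Fin K) :
    Tendsto (count a k) atTop atTop := by
  by_contra hk
  obtain ⟨c, hc⟩ : ∃ c, ∀ t, count a k t < c := by
    simpa [tendsto_atTop_atTop_iff_of_monotone (count_mono a k)] using hk
  have hc0 : 0 < c := (count_zero a k).symm ▸ hc 0
  obtain ⟨j, hj⟩ := exists_count_unbounded a
  obtain ⟨B, hB⟩ := hbdd j
  obtain ⟨b, hb⟩ := ((Set.finite_Iio c).image (m k)).bddBelow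
  obtain ⟨T₀, hT₀⟩ := eventually_atTop.1
    ((tendsto_ucbBonus_atTop hσ hc0).eventually_gt_atTop (2 * (B - b)))
  obtain ⟨T, hT⟩ := (hj.eventually_ge_atTop (max (max T₀ K) (4 * c) + 1)).exists
  obtain ⟨t, -, hplay, hcount, hle⟩ := exists_last_play (a := a) (k := j) (T := T) (by omega)
  have hidx := h.index_le t (by omega) k
  rw [hplay] at hidx
  -- a rarely played arm has a large bonus, while `j` has been played at least `4 c` times
  have hk_index : b + ucbBonus σ t c ≤ m k (count a k t) + ucbBonus σ t (count a k t) :=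
    add_le_add (hb ⟨_, hc t, rfl⟩) (ucbBonus_anti hσ.le t (h.count_pos k (by omega)) (hc t).le)
  have hj_index : m j (count a j t) + ucbBonus σ t (count a j t) ≤ B + ucbBonus σ t c / 2 :=
    add_le_add (hB ⟨_, rfl⟩)
      ((ucbBonus_anti hσ.le t (by omega) (by omega)).trans_eq (ucbBonus_four_mul t c))
  linarith [hT₀ t (by omega)]

lemma tendsto_sampleMean_count (h : IsUCBRun σ m a) (hσ : 0 < σ)
    (hm : ∀ k, Tendsto (m k) atTop (𝓝 (μ k))) (k : Fin K) :
    Tendsto (fun t => m k (count a k t)) atTop (𝓝 (μ k)) :=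
  (hm k).comp (h.tendsto_count_atTop hσ (fun k => (hm k).bddAbove_range) k)

lemma count_le_log (h : IsUCBRun σ m a) (hσ : 0 < σ)
    (hm : ∀ k, Tendsto (m k) atTop (𝓝 (μ k)))
    {j k : Fin K} {δ : ℝ} (hδ : 0 < δ) (hδjk : δ < μ j - μ k) :
    ∃ C, ∀ᶠ T in atTop, (count a k T : ℝ) ≤ 2 * σ ^ 2 / δ ^ 2 * log T + C := by
  set c := 2 * σ ^ 2 / δ ^ 2
  set ε := μ j - μ k - δ
  have hmj := (h.tendsto_sampleMean_count hσ hm j).eventually_const_lt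
    (by linarith : μ j - ε / 2 < μ j)
  have hmk := (h.tendsto_sampleMean_count hσ hm k).eventually_lt_const
    (by linarith : μ k < μ k + ε / 2)
  obtain ⟨T₀, hT₀⟩ := eventually_atTop.1 ((hmj.and hmk).and (eventually_ge_atTop K))
  have hplay : ∀ t, T₀ ≤ t → a (t + 1) = k → (count a k t : ℝ) ≤ c * log ((t : ℝ) + 1) := by
    intro t ht hplay
    obtain ⟨⟨hmj, hmk⟩, hK⟩ := hT₀ t ht
    have hidx := h.index_le t hK j
    rw [hplay] at hidx
    have hbonus : δ ≤ ucbBonus σ t (count a k t) := by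
      linarith [ucbBonus_nonneg hσ.le t (count a j t)]
    exact not_lt.1 ((ucbBonus_lt_iff hσ.le t (h.count_pos k hK) hδ).not.1 hbonus.not_gt)
  have hmono : Monotone fun t : ℕ => c * log ((t : ℝ) + 1) := fun s t hst =>
    mul_le_mul_of_nonneg_left (log_le_log (by positivity) (by gcongr)) (by positivity)
  refine ⟨count a k T₀ + c * log 2 + 1, ?_⟩
  filter_upwards [eventually_ge_atTop 1] with T hT
  have hlog := log_natCast_add_one_le hT
  have hc : 0 ≤ c := by positivity
  have hlogT : 0 ≤ log (T : ℝ) := log_nonneg (by exact_mod_cast hT)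
  have hlog2 : 0 ≤ log (2 : ℝ) := log_nonneg one_le_two
  refine (count_le_max_of_forall_play hmono hplay T).trans (max_le ?_ ?_)
  · nlinarith
  · nlinarith [(count a k T₀).cast_nonneg (α := ℝ)]

lemma isLittleO_count (h : IsUCBRun σ m a) (hσ : 0 < σ)
    (hm : ∀ k, Tendsto (m k) atTop (𝓝 (μ k)))
    {j k : Fin K} (hjk : μ k < μ j) :
    (fun t => (count a k t : ℝ)) =o[atTop] (fun t => (t : ℝ)) := by
  obtain ⟨C, hC⟩ := h.count_le_log hσ hm (j := j) (k := k) (δ := (μ j - μ k) / 2)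
    (by linarith) (by linarith)
  refine (IsBigO.of_bound 1 ?_).trans_isLittleO 
    (isLittleO_const_mul_log_add_const (2 * σ ^ 2 / ((μ j - μ k) / 2) ^ 2) C)
  filter_upwards [hC] with T hT
  rw [one_mul, norm_of_nonneg (by positivity), norm_of_nonneg ((Nat.cast_nonneg _).trans hT)]
  exact hT

lemma count_isEquivalent (h : IsUCBRun σ m a) (hσ : 0 < σ)
    (hm : ∀ k, Tendsto (m k) atTop (𝓝 (μ k))) {kstar : Fin K}
    (hopt : ∀ k, k ≠ kstar → μ k < μ kstar) :
    (fun t => (count a kstar t : ℝ)) ~[atTop] (fun t => (t : ℝ)) := by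
  have hdiff : (fun t => (count a kstar t : ℝ)) - (fun t : ℕ => (t : ℝ))
      = fun t => -∑ k ∈ univ.erase kstar, (count a k t : ℝ) := by
    ext t
    have := congrArg (Nat.cast (R := ℝ)) (sum_count a t)
    rw [Nat.cast_sum, ← add_sum_erase _ _ (mem_univ kstar)] at this
    simp only [Pi.sub_apply]
    linarith
  rw [IsEquivalent, hdiff]
  refine (IsLittleO.fun_sum fun k hk => ?_).neg_left
  exact h.isLittleO_count hσ hm (hopt k (ne_of_mem_erase hk))

lemma tendsto_index_optimal (h : IsUCBRun σ m a) (hσ : 0 < σ)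
    (hm : ∀ k, Tendsto (m k) atTop (𝓝 (μ k))) {kstar : Fin K}
    (hopt : ∀ k, k ≠ kstar → μ k < μ kstar) :
    Tendsto (fun t => m kstar (count a kstar t) + ucbBonus σ t (count a kstar t)) atTop
      (𝓝 (μ kstar)) := by
  have hlog : (fun t : ℕ => log ((t : ℝ) + 1)) =o[atTop] (fun t => (t : ℝ)) := by
    refine (IsBigO.of_bound 1 ?_).trans_isLittleO (isLittleO_const_mul_log_add_const 1 (log 2))
    filter_upwards [eventually_ge_atTop 1] with T hT
    have hT' : (1 : ℝ) ≤ T := by exact_mod_cast hT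
    rw [one_mul, one_mul, norm_of_nonneg (log_nonneg (by linarith)),
      norm_of_nonneg (add_nonneg (log_nonneg hT') (log_nonneg one_le_two))]
    exact log_natCast_add_one_le hT
  have hbonus := tendsto_ucbBonus_nhds_zero (σ := σ)
    (hlog.trans_isBigO (h.count_isEquivalent hσ hm hopt).isBigO_symm).tendsto_div_nhds_zero
  simpa using (h.tendsto_sampleMean_count hσ hm kstar).add hbonus

lemma log_le_count (h : IsUCBRun σ m a) (hσ : 0 < σ)
    (hm : ∀ k, Tendsto (m k) atTop (𝓝 (μ k))) {kstar : Fin K}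
    (hopt : ∀ k, k ≠ kstar → μ k < μ kstar) {k : Fin K} {δ : ℝ} (hδ : μ kstar - μ k < δ) :
    ∃ C, ∀ᶠ T : ℕ in atTop, 2 * σ ^ 2 / δ ^ 2 * log T - C ≤ count a k T := by
  set c := 2 * σ ^ 2 / δ ^ 2
  set ε := δ - (μ kstar - μ k)
  have hδ0 : 0 < δ := by
    rcases eq_or_ne k kstar with rfl | hk
    · linarith
    · linarith [hopt k hk]
  have hidx := (h.tendsto_index_optimal hσ hm hopt).eventually_lt_const
    (by linarith : μ kstar < μ kstar + ε / 2)
  have hmk := (h.tendsto_sampleMean_count hσ hm k).eventually_const_lt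
    (by linarith : μ k - ε / 2 < μ k)
  obtain ⟨T₀, hT₀⟩ := eventually_atTop.1 ((hidx.and hmk).and (eventually_ge_atTop K))
  have hplay : ∀ t, T₀ ≤ t → a (t + 1) = kstar → c * log ((t : ℝ) + 1) < count a k t := by
    intro t ht hplay
    obtain ⟨⟨hidx, hmk⟩, hK⟩ := hT₀ t ht
    have hidx' := h.index_le t hK k
    rw [hplay] at hidx'
    exact (ucbBonus_lt_iff hσ.le t (h.count_pos k hK) hδ0).1 (by linarith)
  -- the optimal arm is played at least `T / 2` times, so its last play before `T` is after `T / 2`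
  have hhalf : ∀ᶠ T : ℕ in atTop, (T : ℝ) / 2 ≤ count a kstar T := by
    filter_upwards [(h.count_isEquivalent hσ hm hopt).isLittleO.def (c := 1 / 2) (by norm_num)]
      with T hT
    simp only [Pi.sub_apply, Real.norm_eq_abs, Nat.abs_cast] at hT
    linarith [neg_abs_le ((count a kstar T : ℝ) - T)]
  refine ⟨c * log 2, ?_⟩
  filter_upwards [hhalf, eventually_ge_atTop (2 * T₀ + 2)] with T hT hT₀T
  have hT₀T' : (2 * T₀ + 2 : ℝ) ≤ T := by exact_mod_cast hT₀T
  obtain ⟨t, htT, hplay', -, hle⟩ := exists_last_play (a := a) (k := kstar) (T := T)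
    (by exact_mod_cast (by linarith : (0 : ℝ) < count a kstar T))
  have hle' : (count a kstar T : ℝ) ≤ t + 1 := by exact_mod_cast hle
  have ht : T₀ ≤ t := by exact_mod_cast (by linarith : (T₀ : ℝ) ≤ t)
  have hlog : log T - log 2 ≤ log ((t : ℝ) + 1) := by
    rw [← log_div (by linarith) two_ne_zero]
    exact log_le_log (by linarith) (by linarith)
  calc c * log T - c * log 2 = c * (log T - log 2) := by ring
    _ ≤ c * log ((t : ℝ) + 1) := by gcongr
    _ ≤ count a k t := (hplay t ht hplay').le
    _ ≤ count a k T := by exact_mod_cast count_mono a k htT.le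

theorem tendsto_count_div_log (h : IsUCBRun σ m a) (hσ : 0 < σ)
    (hm : ∀ k, Tendsto (m k) atTop (𝓝 (μ k))) {kstar : Fin K}
    (hopt : ∀ k, k ≠ kstar → μ k < μ kstar) {k : Fin K} (hk : k ≠ kstar) :
    Tendsto (fun T : ℕ => (count a k T : ℝ) / log T) atTop
      (𝓝 (2 * σ ^ 2 / (μ kstar - μ k) ^ 2)) := by
  have hgap : 0 < μ kstar - μ k := sub_pos.2 (hopt k hk)
  have hcont : Tendsto (fun δ : ℝ => 2 * σ ^ 2 / δ ^ 2) (𝓝 (μ kstar - μ k))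
      (𝓝 (2 * σ ^ 2 / (μ kstar - μ k) ^ 2)) :=
    tendsto_const_nhds.div ((continuous_pow 2).tendsto _) (pow_ne_zero 2 hgap.ne')
  refine tendsto_div_of_bounds (tendsto_log_atTop.comp tendsto_natCast_atTop_atTop)
    (fun b hb => ?_) (fun b hb => ?_)
  · obtain ⟨δ, hbδ, hδ⟩ := ((hcont.mono_left nhdsWithin_le_nhds).eventually
      (lt_mem_nhds hb)).and self_mem_nhdsWithin |>.exists (f := 𝓝[>] (μ kstar - μ k))
    exact ⟨_, hbδ, h.log_le_count hσ hm hopt hδ⟩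
  · obtain ⟨δ, ⟨hbδ, hδ0⟩, hδ⟩ := (((hcont.mono_left nhdsWithin_le_nhds).eventually
      (gt_mem_nhds hb)).and ((lt_mem_nhds hgap).filter_mono nhdsWithin_le_nhds)).and
      self_mem_nhdsWithin |>.exists (f := 𝓝[<] (μ kstar - μ k))
    exact ⟨_, hbδ, h.count_le_log hσ hm hδ0 hδ⟩

end IsUCBRun

end UCB

theorem ucb_K_armed_misspecified_regret_slln_general
    {Ω : Type*} [MeasurableSpace Ω] (P : Measure Ω)
    (K : ℕ)
    (σ : ℝ) (hσ : 0 < σ)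
    (μ : Fin K → ℝ) (kstar : Fin K) (hopt : ∀ k, k ≠ kstar → μ k < μ kstar)
    (Δ : Fin K → ℝ) (hΔ : ∀ k, Δ k = μ kstar - μ k)
    (ν : Fin K → Measure ℝ)
    (hνint : ∀ k, Integrable (fun x : ℝ => x) (ν k))
    (hνmean : ∀ k, ∫ x, x ∂(ν k) = μ k)
    (X : Fin K → ℕ → Ω → ℝ)
    (hXmeas : ∀ k j, Measurable (X k j))
    (hXdist : ∀ k j, 1 ≤ j → P.map (X k j) = ν k)
    (hIndep : iIndepFun (m := fun _ => (inferInstance : MeasurableSpace ℝ))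
      (fun q : Fin K × ℕ => X q.1 q.2) P)
    (A : ℕ → Ω → Fin K)
    (N : Fin K → ℕ → Ω → ℕ)
    (hN : ∀ k t ω, N k t ω = ((Finset.Icc 1 t).filter (fun i => A i ω = k)).card)
    (μhat : Fin K → ℕ → Ω → ℝ)
    (hμhat : ∀ k n ω, μhat k n ω = (∑ j ∈ Finset.Icc 1 n, X k j ω) / (n : ℝ))
    (hInit : ∀ ω k, N k K ω = 1)
    (hA : ∀ t ω, K ≤ t → ∀ k,
      μhat k (N k t ω) ω + σ * Real.sqrt (2 * Real.log ((t : ℝ) + 1) / (N k t ω : ℝ))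
        ≤ μhat (A (t+1) ω) (N (A (t+1) ω) t ω) ω
            + σ * Real.sqrt (2 * Real.log ((t : ℝ) + 1) / (N (A (t+1) ω) t ω : ℝ)))
    (R : ℕ → Ω → ℝ)
    (hR : ∀ T ω, R T ω = ∑ k ∈ Finset.univ.filter (fun k => k ≠ kstar),
      Δ k * (N k T ω : ℝ)) :
    ∀ᵐ ω ∂P,
      (∀ k, k ≠ kstar →
        Tendsto (fun T : ℕ => (N k T ω : ℝ) / Real.log T) atTop
          (𝓝 (2 * σ^2 / (Δ k)^2))) ∧
      Tendsto (fun T : ℕ => R T ω / Real.log T) atTop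
        (𝓝 (∑ k ∈ Finset.univ.filter (fun k => k ≠ kstar), 2 * σ^2 / Δ k)) := by
  obtain rfl : N = fun k t ω => UCB.count (A · ω) k t := by
    funext k t ω
    exact hN k t ω
  have hslln : ∀ᵐ ω ∂P, ∀ k, Tendsto (fun n => μhat k n ω) atTop (𝓝 (μ k)) := by
    refine ae_all_iff.2 fun k => ?_
    simp only [hμhat, ← hνmean k]
    exact ae_tendsto_sampleMean (hXmeas k) (hXdist k) (hνint k)
      fun i j hij => hIndep.indepFun (i := (k, i + 1)) (j := (k, j + 1)) (by simpa using hij)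
  filter_upwards [hslln] with ω hω
  have hucb : UCB.IsUCBRun σ (fun k n => μhat k n ω) (A · ω) := ⟨hInit ω, fun t => hA t ω⟩
  have hcount : ∀ k, k ≠ kstar →
      Tendsto (fun T : ℕ => (UCB.count (A · ω) k T : ℝ) / log T) atTop
        (𝓝 (2 * σ ^ 2 / Δ k ^ 2)) := fun k hk =>
    hΔ k ▸ hucb.tendsto_count_div_log hσ hω hopt hk
  refine ⟨hcount, ?_⟩
  simp only [hR, sum_div, mul_div_assoc]
  refine tendsto_finsetSum _ fun k hk => ?_
  have hΔk : Δ k ≠ 0 := by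
    rw [hΔ]
    exact (sub_pos.2 (hopt k (mem_filter.1 hk).2)).ne'
  convert (hcount k (mem_filter.1 hk).2).const_mul (Δ k) using 2
  field_simp

/-- **SLLN for the regret of UCB designed for Gaussian rewards with variance `σ²`, in a
possibly mis-specified K-armed bandit (Proposition 1 of the paper, UCB case).**
Arms are indexed by `Fin K`, with unique optimal arm `kstar` and gaps
`Δ k = μ kstar - μ k > 0` for `k ≠ kstar`.  The rewards `X k j` (for `j ≥ 1`) of arm `k`
are iid with arbitrary distribution `ν k` having finite mean `μ k`, independent across
arms.  `N k t` is the number of plays of arm `k` up to time `t` and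
`μhat k n = (1/n) ∑_{j=1}^n X k j`.  Each arm is played once during the first `K` times;
for `t ≥ K`, at time `t+1` UCB plays an arm maximizing the index
`μhat k (N k t) + σ √(2 log(t+1) / N k t)`.
The regret is `R T = ∑_{k ≠ kstar} Δ k * N k T`.  Conclusions: almost surely,
`N k T / log T → 2σ²/Δ k²` for every sub-optimal arm `k`, and
`R T / log T → ∑_{k ≠ kstar} 2σ²/Δ k`. -/
theorem ucb_K_armed_misspecified_regret_slln
    {Ω : Type*} [MeasurableSpace Ω] (P : Measure Ω) [IsProbabilityMeasure P]
    (K : ℕ) (hK : 2 ≤ K)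
    (σ : ℝ) (hσ : 0 < σ)
    (μ : Fin K → ℝ) (kstar : Fin K) (hopt : ∀ k, k ≠ kstar → μ k < μ kstar)
    (Δ : Fin K → ℝ) (hΔ : ∀ k, Δ k = μ kstar - μ k)
    (ν : Fin K → Measure ℝ) (hνprob : ∀ k, IsProbabilityMeasure (ν k))
    (hνint : ∀ k, Integrable (fun x : ℝ => x) (ν k))
    (hνmean : ∀ k, ∫ x, x ∂(ν k) = μ k)
    (X : Fin K → ℕ → Ω → ℝ)
    (hXmeas : ∀ k j, Measurable (X k j))
    (hXdist : ∀ k j, 1 ≤ j → P.map (X k j) = ν k)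
    (hIndep : iIndepFun (m := fun _ => (inferInstance : MeasurableSpace ℝ))
      (fun q : Fin K × ℕ => X q.1 q.2) P)
    (A : ℕ → Ω → Fin K) (hAmeas : ∀ t, Measurable (A t))
    (N : Fin K → ℕ → Ω → ℕ)
    (hN : ∀ k t ω, N k t ω = ((Finset.Icc 1 t).filter (fun i => A i ω = k)).card)
    (μhat : Fin K → ℕ → Ω → ℝ)
    (hμhat : ∀ k n ω, μhat k n ω = (∑ j ∈ Finset.Icc 1 n, X k j ω) / (n : ℝ))
    (hInit : ∀ ω k, N k K ω = 1)
    (hA : ∀ t ω, K ≤ t → ∀ k,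
      μhat k (N k t ω) ω + σ * Real.sqrt (2 * Real.log ((t : ℝ) + 1) / (N k t ω : ℝ))
        ≤ μhat (A (t+1) ω) (N (A (t+1) ω) t ω) ω
            + σ * Real.sqrt (2 * Real.log ((t : ℝ) + 1) / (N (A (t+1) ω) t ω : ℝ)))
    (R : ℕ → Ω → ℝ)
    (hR : ∀ T ω, R T ω = ∑ k ∈ Finset.univ.filter (fun k => k ≠ kstar),
      Δ k * (N k T ω : ℝ)) :
    ∀ᵐ ω ∂P,
      (∀ k, k ≠ kstar →
        Tendsto (fun T : ℕ => (N k T ω : ℝ) / Real.log T) atTop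
          (𝓝 (2 * σ^2 / (Δ k)^2))) ∧
      Tendsto (fun T : ℕ => R T ω / Real.log T) atTop
        (𝓝 (∑ k ∈ Finset.univ.filter (fun k => k ≠ kstar), 2 * σ^2 / Δ k)) :=
  ucb_K_armed_misspecified_regret_slln_general P K σ hσ μ kstar hopt Δ hΔ ν hνint hνmean X hXmeas
    hXdist hIndep A N hN μhat hμhat hInit hA R hR
end

section
/- Let c > 0 and let (G_j)_{j≥1} be independent random variables with G_j geometrically distributed on {1,2,…} with success probability p_j = min(1, exp(−jc)). Then log(∑_{j=1}^n G_j)/n → c almost surely as n → ∞. -/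
/-!
For `ε > 0` the geometric tails give
`P(G_j ≥ e^{j(c+ε)}) ≤ exp(-p_j (e^{j(c+ε)} - 1)) ≤ e^{-jε}` and
`P(G_j ≤ e^{j(c-ε)}) ≤ e^{j(c-ε)} p_j = e^{-jε}`, both summable in `j`, so by
Borel–Cantelli `log G_j / j → c` almost surely. Deterministically
`G_n ≤ ∑_{j ≤ n} G_j ≤ n · max_{j ≤ n} G_j`, and the logarithms of both bounds, divided by
`n`, tend to `c` once `log G_j / j` does.
-/

open MeasureTheory ProbabilityTheory Filter Finset Real Topology

lemma log_div_mem_ball_of_exp_lt {x t c ε : ℝ} (ht : 0 < t)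
    (hlow : exp (t * (c - ε)) < x) (hup : x < exp (t * (c + ε))) :
    log x / t ∈ Metric.ball c ε := by
  have hx : 0 < x := (exp_pos _).trans hlow
  have hlow' := (lt_log_iff_exp_lt hx).2 hlow
  have hup' := (log_lt_iff_lt_exp hx).2 hup
  rw [Metric.mem_ball, dist_eq, abs_sub_lt_iff, sub_lt_iff_lt_add, sub_lt_iff_lt_add,
    div_lt_iff₀ ht, ← sub_lt_iff_lt_add', lt_div_iff₀ ht]
  constructor <;> linarith

lemma exists_le_mul_exp_of_eventually_lt {x : ℕ → ℝ} {d : ℝ}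
    (h : ∀ᶠ j : ℕ in atTop, x j < exp (j * d)) :
    ∃ C, ∀ j : ℕ, x j ≤ C * exp (j * d) := by
  have hbdd : ∀ᶠ j : ℕ in atTop, x j / exp (j * d) ≤ 1 :=
    h.mono fun j hj => (div_le_one (exp_pos _)).2 hj.le
  obtain ⟨C, hC⟩ := (isBoundedUnder_of_eventually_le hbdd).bddAbove_range
  exact ⟨C, fun j => (div_le_iff₀ (exp_pos _)).1 (hC ⟨j, rfl⟩)⟩

lemma tendsto_log_div_natCast_add_const (C : ℝ) :
    Tendsto (fun n : ℕ => (log n + C) / n) atTop (𝓝 0) := by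
  have hlog : Tendsto (fun n : ℕ => log n / n) atTop (𝓝 0) := by
    have := (tendsto_pow_log_div_mul_add_atTop 1 0 1 one_ne_zero).comp tendsto_natCast_atTop_atTop
    simpa [Function.comp_def] using this
  simpa [add_div] using hlog.add (tendsto_const_div_atTop_nhds_zero_nat C)

lemma log_sum_le_of_le_mul_exp {x : ℕ → ℝ} {C d : ℝ} (hx : ∀ j, 0 < x j) (hC0 : 0 < C)
    (hd : 0 ≤ d) (hC : ∀ j : ℕ, x j ≤ C * exp (j * d)) {n : ℕ} (hn : 1 ≤ n) :
    log (∑ j ∈ Icc 1 n, x j) ≤ log n + log C + n * d := by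
  have hn0 : (0 : ℝ) < n := by exact_mod_cast hn
  have hsum : ∑ j ∈ Icc 1 n, x j ≤ n * (C * exp (n * d)) := by
    calc ∑ j ∈ Icc 1 n, x j ≤ ∑ _j ∈ Icc 1 n, C * exp (n * d) := by
          refine sum_le_sum fun j hj => (hC j).trans ?_
          gcongr
          exact_mod_cast (mem_Icc.1 hj).2
      _ = n * (C * exp (n * d)) := by simp
  calc log (∑ j ∈ Icc 1 n, x j) ≤ log (n * (C * exp (n * d))) :=
        log_le_log (sum_pos (fun j _ => hx j) ⟨n, mem_Icc.2 ⟨hn, le_rfl⟩⟩) hsum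
    _ = log n + log C + n * d := by
        rw [log_mul hn0.ne' (by positivity), log_mul hC0.ne' (exp_pos _).ne', log_exp,
          add_assoc]

lemma tendsto_log_sum_div_of_tendsto_log_div {x : ℕ → ℝ} {c : ℝ} (hx : ∀ j, 1 ≤ x j)
    (h : Tendsto (fun j : ℕ => log (x j) / j) atTop (𝓝 c)) :
    Tendsto (fun n : ℕ => log (∑ j ∈ Icc 1 n, x j) / n) atTop (𝓝 c) := by
  have hx0 : ∀ j, 0 < x j := fun j => one_pos.trans_le (hx j)
  refine tendsto_order.2 ⟨fun a ha => ?_, fun b hb => ?_⟩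
  · filter_upwards [h.eventually (lt_mem_nhds ha), eventually_ge_atTop 1] with n han hn
    have hxn : x n ≤ ∑ j ∈ Icc 1 n, x j :=
      single_le_sum (fun j _ => (hx0 j).le) (mem_Icc.2 ⟨hn, le_rfl⟩)
    exact han.trans_le (div_le_div_of_nonneg_right (log_le_log (hx0 n) hxn) n.cast_nonneg)
  · obtain ⟨d, hcd, hdb⟩ := exists_between hb
    have hd : 0 ≤ d := (ge_of_tendsto' h fun j =>
      div_nonneg (log_nonneg (hx j)) j.cast_nonneg).trans hcd.le
    obtain ⟨C, hC⟩ := exists_le_mul_exp_of_eventually_lt <| by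
      filter_upwards [h.eventually (gt_mem_nhds hcd), eventually_ge_atTop 1] with j hj hj1
      rw [div_lt_iff₀ (by exact_mod_cast hj1)] at hj
      exact (log_lt_iff_lt_exp (hx0 j)).1 (by linarith)
    have hC0 : 0 < C := by simpa using (hx0 0).trans_le (hC 0)
    have hlim := (tendsto_log_div_natCast_add_const (log C)).add_const d
    rw [zero_add] at hlim
    filter_upwards [hlim.eventually (gt_mem_nhds hdb), eventually_ge_atTop 1] with n hn hn1
    have hn0 : (0 : ℝ) < n := by exact_mod_cast hn1
    have hlog := log_sum_le_of_le_mul_exp hx0 hC0 hd hC hn1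
    calc log (∑ j ∈ Icc 1 n, x j) / n ≤ (log n + log C + n * d) / n :=
          div_le_div_of_nonneg_right hlog hn0.le
      _ = (log n + log C) / n + d := by field_simp
      _ < b := hn

section GeometricTail

variable {Ω : Type*} [MeasurableSpace Ω]

def HasGeometricMasses (P : Measure Ω) (X : Ω → ℕ) (q : ℝ) : Prop :=
  ∀ m : ℕ, 1 ≤ m → P {ω | X ω = m} = ENNReal.ofReal ((1 - q) ^ (m - 1) * q)

namespace HasGeometricMasses

variable {P : Measure Ω} {X : Ω → ℕ} {q : ℝ}

lemma measure_ge_le_pow (hX : HasGeometricMasses P X q) (hq0 : 0 < q) (hq1 : q ≤ 1)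
    {m : ℕ} (hm : 1 ≤ m) :
    P {ω | m ≤ X ω} ≤ ENNReal.ofReal ((1 - q) ^ (m - 1)) := by
  have hr0 : 0 ≤ 1 - q := by linarith
  have hr1 : 1 - q < 1 := by linarith
  have hset : {ω | m ≤ X ω} = ⋃ k : ℕ, {ω | X ω = m + k} := by
    ext ω; simp [le_iff_exists_add]
  calc P {ω | m ≤ X ω} ≤ ∑' k : ℕ, P {ω | X ω = m + k} := hset ▸ measure_iUnion_le _
    _ = ∑' k : ℕ, ENNReal.ofReal ((1 - q) ^ (m - 1) * q * (1 - q) ^ k) := by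
        refine tsum_congr fun k => ?_
        rw [hX (m + k) (le_add_right hm), show m + k - 1 = m - 1 + k by omega, pow_add]
        ring_nf
    _ = ENNReal.ofReal (∑' k : ℕ, (1 - q) ^ (m - 1) * q * (1 - q) ^ k) :=
        (ENNReal.ofReal_tsum_of_nonneg (fun k => by positivity)
          ((summable_geometric_of_lt_one hr0 hr1).mul_left _)).symm
    _ = ENNReal.ofReal ((1 - q) ^ (m - 1)) := by
        rw [tsum_mul_left, tsum_geometric_of_lt_one hr0 hr1, sub_sub_cancel,
          mul_assoc, mul_inv_cancel₀ hq0.ne', mul_one]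

lemma measure_le_le_mul (hX : HasGeometricMasses P X q) (hq0 : 0 ≤ q) (hq1 : q ≤ 1)
    (h0 : P {ω | X ω = 0} = 0) (m : ℕ) :
    P {ω | X ω ≤ m} ≤ ENNReal.ofReal (m * q) := by
  have hsub : {ω | X ω ≤ m} ⊆ ⋃ i ∈ range (m + 1), {ω | X ω = i} := fun ω hω => by
    simpa using Nat.lt_succ_of_le hω
  have hpoint : ∀ i : ℕ, P {ω | X ω = i + 1} ≤ ENNReal.ofReal q := fun i => by
    rw [hX (i + 1) (Nat.le_add_left 1 i)]
    exact ENNReal.ofReal_le_ofReal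
      (mul_le_of_le_one_left hq0 (pow_le_one₀ (by linarith) (by linarith)))
  calc P {ω | X ω ≤ m}
      ≤ ∑ i ∈ range (m + 1), P {ω | X ω = i} :=
        (measure_mono hsub).trans (measure_biUnion_finset_le _ _)
    _ = ∑ i ∈ range m, P {ω | X ω = i + 1} + P {ω | X ω = 0} := sum_range_succ' _ m
    _ ≤ ∑ _i ∈ range m, ENNReal.ofReal q + 0 := by
        gcongr with i _
        · exact hpoint i
        · exact h0.le
    _ = ENNReal.ofReal (m * q) := by
        rw [sum_const, card_range, add_zero, ENNReal.ofReal_mul (by positivity),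
          ENNReal.ofReal_natCast, nsmul_eq_mul]

lemma measure_ge_real_le_exp (hX : HasGeometricMasses P X q) (hq0 : 0 < q) (hq1 : q ≤ 1)
    {t : ℝ} (ht : 1 ≤ t) :
    P {ω | t ≤ X ω} ≤ ENNReal.ofReal (exp (-(q * (t - 1)))) := by
  set m := ⌈t⌉₊
  have hm : 1 ≤ m := Nat.one_le_iff_ne_zero.2 (Nat.ceil_pos.2 (by linarith)).ne'
  have hset : {ω | t ≤ X ω} = {ω | m ≤ X ω} := by
    ext ω; simp [m, Nat.ceil_le]
  rw [hset]
  refine (hX.measure_ge_le_pow hq0 hq1 hm).trans (ENNReal.ofReal_le_ofReal ?_)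
  calc (1 - q) ^ (m - 1) ≤ exp (-q) ^ (m - 1) :=
        pow_le_pow_left₀ (by linarith) (one_sub_le_exp_neg q) _
    _ = exp (-(q * (m - 1 : ℕ))) := by rw [← exp_nat_mul]; ring_nf
    _ ≤ exp (-(q * (t - 1))) := by
        gcongr
        rw [Nat.cast_sub hm, Nat.cast_one]
        linarith [Nat.le_ceil t]

lemma measure_le_real_le_mul (hX : HasGeometricMasses P X q) (hq0 : 0 ≤ q) (hq1 : q ≤ 1)
    (h0 : P {ω | X ω = 0} = 0) {t : ℝ} (ht : 0 ≤ t) :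
    P {ω | (X ω : ℝ) ≤ t} ≤ ENNReal.ofReal (t * q) := by
  have hset : {ω | (X ω : ℝ) ≤ t} = {ω | X ω ≤ ⌊t⌋₊} := by
    ext ω; simp [Nat.le_floor_iff ht]
  rw [hset]
  refine (hX.measure_le_le_mul hq0 hq1 h0 _).trans (ENNReal.ofReal_le_ofReal ?_)
  gcongr
  exact Nat.floor_le ht

end HasGeometricMasses

end GeometricTail

lemma ae_eventually_notMem_of_summable {Ω : Type*} [MeasurableSpace Ω] {P : Measure Ω}
    {s : ℕ → Set Ω} {b : ℕ → ℝ} (hb0 : ∀ n, 0 ≤ b n) (hb : Summable b)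
    (h : ∀ n, P (s n) ≤ ENNReal.ofReal (b n)) :
    ∀ᵐ ω ∂P, ∀ᶠ n in atTop, ω ∉ s n := by
  refine ae_eventually_notMem (ne_top_of_le_ne_top ?_ (ENNReal.tsum_le_tsum h))
  rw [← ENNReal.ofReal_tsum_of_nonneg hb0 hb]
  exact ENNReal.ofReal_ne_top

section ExponentialGeometric

variable {Ω : Type*} [MeasurableSpace Ω] {P : Measure Ω} {G : ℕ → Ω → ℕ} {c ε : ℝ}

lemma ae_eventually_lt_exp_of_geometric (hc : 0 ≤ c) (hε : 0 < ε)
    (hG : ∀ j : ℕ, HasGeometricMasses P (G j) (exp (-j * c))) :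
    ∀ᵐ ω ∂P, ∀ᶠ j : ℕ in atTop, (G j ω : ℝ) < exp (j * (c + ε)) := by
  have hBC := ae_eventually_notMem_of_summable (P := P)
    (s := fun j : ℕ => {ω | exp (j * (c + ε)) ≤ G j ω}) (fun j => (exp_pos (j * -ε)).le)
    (summable_exp_nat_mul_iff.2 (neg_lt_zero.2 hε)) fun j => by
      have hq1 : exp (-j * c) ≤ 1 := exp_le_one_iff.2 (by nlinarith [j.cast_nonneg (α := ℝ)])
      refine ((hG j).measure_ge_real_le_exp (exp_pos _) hq1
        (one_le_exp (by positivity))).trans (ENNReal.ofReal_le_ofReal (exp_le_exp.2 ?_))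
      -- `exp (-j c) (exp (j (c + ε)) - 1) = exp (j ε) - exp (-j c) ≥ exp (j ε) - 1 ≥ j ε`
      have hprod : exp (-j * c) * exp (j * (c + ε)) = exp (j * ε) := by
        rw [← exp_add]; ring_nf
      nlinarith [add_one_le_exp (j * ε)]
  filter_upwards [hBC] with ω hω
  exact hω.mono fun j hj => not_le.1 hj

lemma ae_eventually_exp_lt_of_geometric (hc : 0 ≤ c) (hε : 0 < ε)
    (h0 : ∀ j, P {ω | G j ω = 0} = 0)
    (hG : ∀ j : ℕ, HasGeometricMasses P (G j) (exp (-j * c))) :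
    ∀ᵐ ω ∂P, ∀ᶠ j : ℕ in atTop, exp (j * (c - ε)) < G j ω := by
  have hBC := ae_eventually_notMem_of_summable (P := P)
    (s := fun j : ℕ => {ω | (G j ω : ℝ) ≤ exp (j * (c - ε))})
    (fun j => (exp_pos (j * -ε)).le)
    (summable_exp_nat_mul_iff.2 (neg_lt_zero.2 hε)) fun j => by
      have hq1 : exp (-j * c) ≤ 1 := exp_le_one_iff.2 (by nlinarith [j.cast_nonneg (α := ℝ)])
      refine ((hG j).measure_le_real_le_mul (exp_pos _).le hq1 (h0 j)
        (exp_pos _).le).trans (ENNReal.ofReal_le_ofReal (le_of_eq ?_))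
      rw [← exp_add]; ring_nf
  filter_upwards [hBC] with ω hω
  exact hω.mono fun j hj => not_le.1 hj

lemma ae_tendsto_log_div_of_geometric (hc : 0 ≤ c) (h0 : ∀ j, P {ω | G j ω = 0} = 0)
    (hG : ∀ j : ℕ, HasGeometricMasses P (G j) (exp (-j * c))) :
    ∀ᵐ ω ∂P, Tendsto (fun j : ℕ => log (G j ω) / j) atTop (𝓝 c) := by
  have hball : ∀ k : ℕ, ∀ᵐ ω ∂P, ∀ᶠ j : ℕ in atTop,
      log (G j ω) / j ∈ Metric.ball c (1 / (k + 1)) := fun k => by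
    have hε : (0 : ℝ) < 1 / (k + 1) := by positivity
    filter_upwards [ae_eventually_lt_exp_of_geometric hc hε hG,
      ae_eventually_exp_lt_of_geometric hc hε h0 hG] with ω hup hlow
    filter_upwards [hup, hlow, eventually_ge_atTop 1] with j hju hjl hj
    exact log_div_mem_ball_of_exp_lt (by exact_mod_cast hj) hjl hju
  filter_upwards [ae_all_iff.2 hball] with ω hω
  exact Metric.nhds_basis_ball_inv_nat_succ.tendsto_right_iff.2 fun k _ => hω k

end ExponentialGeometric

theorem log_sum_geometric_tendsto_general
    {Ω : Type*} [MeasurableSpace Ω] (P : Measure Ω)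
    (c : ℝ) (hc : 0 < c)
    (p : ℕ → ℝ) (hp : ∀ j, p j = min 1 (Real.exp (-(j : ℝ) * c)))
    (G : ℕ → Ω → ℕ)
    (hGpos : ∀ j, P {ω | G j ω = 0} = 0)
    (hGdist : ∀ j, ∀ m : ℕ, 1 ≤ m →
      P {ω | G j ω = m} = ENNReal.ofReal ((1 - p j)^(m - 1) * p j)) :
    ∀ᵐ ω ∂P, Tendsto (fun n : ℕ =>
        Real.log (∑ j ∈ Finset.Icc 1 n, (G j ω : ℝ)) / (n : ℝ))
      atTop (𝓝 c) := by
  have hp_exp : ∀ j : ℕ, p j = exp (-j * c) := fun j =>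
    (hp j).trans (min_eq_right (exp_le_one_iff.2 (by nlinarith [j.cast_nonneg (α := ℝ)])))
  have hG : ∀ j : ℕ, HasGeometricMasses P (G j) (exp (-j * c)) := fun j => hp_exp j ▸ hGdist j
  have hG_ne_zero : ∀ᵐ ω ∂P, ∀ j, G j ω ≠ 0 :=
    ae_all_iff.2 fun j => measure_eq_zero_iff_ae_notMem.1 (hGpos j)
  filter_upwards [ae_tendsto_log_div_of_geometric hc.le hGpos hG, hG_ne_zero] with ω hlim hω
  exact tendsto_log_sum_div_of_tendsto_log_div
    (fun j => Nat.one_le_cast.2 (Nat.one_le_iff_ne_zero.2 (hω j))) hlim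

/-- **SLLN for sums of geometric random variables with exponentially decaying success
probabilities (the coupled geometric approximation process in the proof of Theorem 1).**
Let `c > 0` and let `G j` be independent random variables, with `G j` geometrically
distributed on `{1,2,…}` with success probability `p j = min 1 (exp(-j c))`, i.e.
`P(G j = m) = (1 - p j)^(m-1) * p j` for `m ≥ 1`.  Then
`log(∑_{j=1}^n G j) / n → c` almost surely. -/
theorem log_sum_geometric_tendsto
    {Ω : Type*} [MeasurableSpace Ω] (P : Measure Ω) [IsProbabilityMeasure P]
    (c : ℝ) (hc : 0 < c)
    (p : ℕ → ℝ) (hp : ∀ j, p j = min 1 (Real.exp (-(j : ℝ) * c)))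
    (G : ℕ → Ω → ℕ) (hGmeas : ∀ j, Measurable (G j))
    (hGindep : iIndepFun G P)
    (hGpos : ∀ j, P {ω | G j ω = 0} = 0)
    (hGdist : ∀ j, ∀ m : ℕ, 1 ≤ m →
      P {ω | G j ω = m} = ENNReal.ofReal ((1 - p j)^(m - 1) * p j)) :
    ∀ᵐ ω ∂P, Tendsto (fun n : ℕ =>
        Real.log (∑ j ∈ Finset.Icc 1 n, (G j ω : ℝ)) / (n : ℝ))
      atTop (𝓝 c) :=
  log_sum_geometric_tendsto_general P c hc p hp G hGpos hGdist
end
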